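/- Let G be a finite group, H ≤ G, and suppose the sets X₁,…,Xₙ are H-sets. For λ : G/H → [n] with stabilizer G_λ and double coset representatives g₁,…,g_r for G_λ\G/H, there is a G_λ-equivariant bijection F_λ(X₁,…,Xₙ) ≅ ∏_{i=1}^r Coind_{H_{g_i}}^{G_λ} Res_{H_{g_i}}^H X_{λ(g_i H)}, where H_g = G_λ ∩ gHg⁻¹ acts on X via h·x = (g⁻¹hg)·x. -/

import Mathlib

variable {G : Type} [Group G]

/-- The action of `G` on functions `G ⧸ H → Fin n` by `(g • l) x = l (g⁻¹ • x)`. -/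
instance arrowMulAction (H : Subgroup G) (n : ℕ) : MulAction G ((G ⧸ H) → Fin n) where
  smul g l := fun x => l (g⁻¹ • x)
  one_smul l := by funext x; show l ((1:G)⁻¹ • x) = l x; simp
  mul_smul a b l := by
    funext x
    show l ((a * b)⁻¹ • x) = l (b⁻¹ • a⁻¹ • x)
    rw [mul_inv_rev, mul_smul]

/-- The stabilizer `G_λ` of `λ : G ⧸ H → Fin n`. -/
def stab (H : Subgroup G) {n : ℕ} (l : G ⧸ H → Fin n) : Subgroup G where
  carrier := {g | ∀ x, l (g⁻¹ • x) = l x}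
  one_mem' := by intro x; simp
  mul_mem' := by
    intro a b ha hb x
    simp only [Set.mem_setOf_eq] at *
    rw [mul_inv_rev, mul_smul, hb, ha]
  inv_mem' := by
    intro a ha x
    simp only [Set.mem_setOf_eq] at *
    have h := ha (a • x)
    rw [inv_smul_smul] at h
    rw [inv_inv]
    exact h.symm

/-- Coinduction: `H`-equivariant maps `G → X`, a `G`-set. -/
def Coind (H : Subgroup G) (X : Type) [MulAction H X] : Type :=
  {f : G → X // ∀ (g : G) (h : H), f (g * h) = h⁻¹ • f g}

instance Coind.mulAction (H : Subgroup G) (X : Type) [MulAction H X] :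
    MulAction G (Coind H X) where
  smul g f := ⟨fun g' => f.1 (g⁻¹ * g'), by
    intro g' h
    show f.1 (g⁻¹ * (g' * h)) = h⁻¹ • f.1 (g⁻¹ * g')
    rw [← mul_assoc]
    exact f.2 (g⁻¹ * g') h⟩
  one_smul f := Subtype.ext (funext fun g' => by show f.1 ((1:G)⁻¹ * g') = f.1 g'; simp)
  mul_smul a b f := Subtype.ext (funext fun g' => by
    show f.1 ((a * b)⁻¹ * g') = f.1 (b⁻¹ * (a⁻¹ * g'))
    rw [mul_inv_rev, mul_assoc])

instance sigmaMulAction (H : Subgroup G) {n : ℕ} (X : Fin n → Type)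
    [∀ i, MulAction H (X i)] : MulAction H (Σ i, X i) where
  smul h p := ⟨p.1, h • p.2⟩
  one_smul p := by cases p with | mk i x => show (⟨i, (1:H) • x⟩ : Σ i, X i) = ⟨i, x⟩; rw [one_smul]
  mul_smul a b p := by
    cases p with | mk i x =>
      show (⟨i, (a * b) • x⟩ : Σ i, X i) = ⟨i, a • b • x⟩
      rw [mul_smul]

/-- The map recording in which summand an element of `Coind_H^G (X₁ ⊔ ⋯ ⊔ Xₙ)` takes its values. -/
def component (H : Subgroup G) {n : ℕ} (X : Fin n → Type) [∀ i, MulAction H (X i)]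
    (f : Coind H (Σ i, X i)) : G ⧸ H → Fin n :=
  Quotient.lift (fun g => (f.1 g).1) (by
    intro a b hab
    have hmem : a⁻¹ * b ∈ H := QuotientGroup.leftRel_apply.mp hab
    show (f.1 a).1 = (f.1 b).1
    have hb : f.1 b = f.1 (a * ((⟨a⁻¹ * b, hmem⟩ : H) : G)) := by
      simp [mul_inv_cancel_left]
    rw [hb, f.2 a ⟨a⁻¹ * b, hmem⟩]
    rfl)

/-- `F_λ`: the fiber of the component map over `λ`. -/
def Flambda (H : Subgroup G) {n : ℕ} (X : Fin n → Type) [∀ i, MulAction H (X i)]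
    (l : G ⧸ H → Fin n) : Type :=
  {f : Coind H (Σ i, X i) // component H X f = l}

theorem component_smul (H : Subgroup G) {n : ℕ} (X : Fin n → Type) [∀ i, MulAction H (X i)]
    (g : G) (f : Coind H (Σ i, X i)) :
    component H X (g • f) = g • component H X f := by
  funext x
  induction x using QuotientGroup.induction_on with
  | H g' => rfl

/-- `F_λ` is a `G_λ`-set. -/
instance Flambda.mulAction (H : Subgroup G) {n : ℕ} (X : Fin n → Type)
    [∀ i, MulAction H (X i)] (l : G ⧸ H → Fin n) :
    MulAction (stab H l) (Flambda H X l) where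
  smul k f := ⟨(k : G) • f.1, by
    rw [component_smul, f.2]
    funext x
    exact k.2 x⟩
  one_smul f := Subtype.ext (by
    show ((1 : stab H l) : G) • f.1 = f.1
    rw [Subgroup.coe_one, one_smul])
  mul_smul a b f := Subtype.ext (by
    show ((a * b : stab H l) : G) • f.1 = (a : G) • (b : G) • f.1
    rw [Subgroup.coe_mul, mul_smul])

/-- The conjugate subgroup `g H g⁻¹`. -/
def conjSub (H : Subgroup G) (g : G) : Subgroup G where
  carrier := {x | g⁻¹ * x * g ∈ H}
  one_mem' := by simpa using H.one_mem
  mul_mem' := by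
    intro a b ha hb
    simp only [Set.mem_setOf_eq] at *
    convert mul_mem ha hb using 1
    group
  inv_mem' := by
    intro a ha
    simp only [Set.mem_setOf_eq] at *
    convert inv_mem ha using 1
    group

/-- The action of `H_g = K ∩ gHg⁻¹` (as a subgroup of `K`) on an `H`-set `X`
via `h • x = (g⁻¹ h g) • x`. -/
def dcAction (H K : Subgroup G) (g : G) (X : Type) [MulAction H X] :
    MulAction ((K ⊓ conjSub H g).subgroupOf K) X where
  smul k x :=
    (⟨g⁻¹ * ((k : K) : G) * g, (Subgroup.mem_inf.mp (Subgroup.mem_subgroupOf.mp k.2)).2⟩ : H) • x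
  one_smul x := by
    show (⟨g⁻¹ * _ * g, _⟩ : H) • x = x
    have h1 : (⟨g⁻¹ * (((1 : (K ⊓ conjSub H g).subgroupOf K) : K) : G) * g,
        (Subgroup.mem_inf.mp (Subgroup.mem_subgroupOf.mp
          (1 : (K ⊓ conjSub H g).subgroupOf K).2)).2⟩ : H) = 1 := by
      ext
      simp
    rw [h1, one_smul]
  mul_smul a b x := by
    show (⟨g⁻¹ * _ * g, _⟩ : H) • x = (⟨g⁻¹ * _ * g, _⟩ : H) • ((⟨g⁻¹ * _ * g, _⟩ : H) • x)
    rw [← mul_smul]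
    congr 1
    ext
    show g⁻¹ * (((a * b : (K ⊓ conjSub H g).subgroupOf K) : K) : G) * g
      = (g⁻¹ * ((a : K) : G) * g) * (g⁻¹ * ((b : K) : G) * g)
    push_cast
    group

/-!
Restricted to `K = G_λ`, `Coind_H^G Y` splits along the double cosets `K gᵢ H` (Mackey): `F` goes
to the `K ∩ gᵢHgᵢ⁻¹`-equivariant maps `c ↦ F (c gᵢ)`, and back, `φ` goes to `k gᵢ h ↦ h⁻¹ • φᵢ k`,
which does not depend on how the argument is decomposed. For `Y = X₁ ⊔ ⋯ ⊔ Xₙ`, `F` lies in `F_λ`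
iff each `F (c gᵢ)` lies in `X_{λ(gᵢH)}`, since `c ∈ G_λ` fixes `λ`; so the `i`-th component of `F`
is a map into that single summand.
-/

attribute [local instance] dcAction

open Function

namespace Sigma

variable {ι : Type*} {X : ι → Type*}

def castSnd (p : Σ i, X i) {j : ι} (hp : p.1 = j) : X j := hp ▸ p.2

theorem castSnd_eq_iff {p : Σ i, X i} {j : ι} (hp : p.1 = j) {x : X j} :
    p.castSnd hp = x ↔ p = ⟨j, x⟩ := by
  obtain ⟨i, y⟩ := p
  cases hp
  simp [castSnd]

theorem mk_castSnd (p : Σ i, X i) {j : ι} (hp : p.1 = j) : (⟨j, p.castSnd hp⟩ : Σ i, X i) = p :=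
  ((castSnd_eq_iff hp).1 rfl).symm

theorem castSnd_congr {p q : Σ i, X i} {j : ι} (h : p = q) (hp : p.1 = j) (hq : q.1 = j) :
    p.castSnd hp = q.castSnd hq := by
  subst h
  rfl

end Sigma

section Mackey

variable {H K : Subgroup G} {Y : Type} [MulAction H Y] {ι : Type*} {g : ι → G}

def conjHom (H K : Subgroup G) (a : G) : (K ⊓ conjSub H a).subgroupOf K →* H where
  toFun u := ⟨a⁻¹ * u * a, (Subgroup.mem_inf.mp (Subgroup.mem_subgroupOf.mp u.2)).2⟩
  map_one' := by ext; simp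
  map_mul' u v := by ext; simp only [MulMemClass.coe_mul]; group

theorem dcAction_smul_eq {a : G} (u : (K ⊓ conjSub H a).subgroupOf K) (y : Y) :
    u • y = conjHom H K a u • y :=
  rfl

def mackeyRestrict (K : Subgroup G) (g : ι → G) (F : Coind H Y) (i : ι) :
    Coind ((K ⊓ conjSub H (g i)).subgroupOf K) Y :=
  ⟨fun c => F.1 (c * g i), fun c u => by
    show F.1 _ = conjHom H K (g i) u⁻¹ • F.1 _
    rw [map_inv, ← F.2]
    simp [conjHom, mul_assoc]⟩

theorem mackeyRestrict_smul (k : K) (F : Coind H Y) (i : ι) :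
    mackeyRestrict K g ((k : G) • F) i = k • mackeyRestrict K g F i :=
  Subtype.ext <| funext fun c => congrArg F.1 (by simp [mul_assoc])

theorem exists_eq_mul_mul (hg : Surjective fun i => DoubleCoset.mk K H (g i)) (a : G) :
    ∃ p : ι × K × H, a = p.2.1 * g p.1 * p.2.2 := by
  obtain ⟨i, hi⟩ := hg (DoubleCoset.mk K H a)
  obtain ⟨k, hk, h, hh, rfl⟩ := (DoubleCoset.eq _ _ _ _).mp hi
  exact ⟨(i, ⟨k, hk⟩, ⟨h, hh⟩), rfl⟩

theorem inv_smul_apply_congr (hg : Injective fun i => DoubleCoset.mk K H (g i))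
    (φ : ∀ i, Coind ((K ⊓ conjSub H (g i)).subgroupOf K) Y) {i i' : ι} {k k' : K} {h h' : H}
    (e : (k : G) * g i * h = k' * g i' * h') :
    h⁻¹ • (φ i).1 k = h'⁻¹ • (φ i').1 k' := by
  obtain rfl : i = i' := hg <| (DoubleCoset.eq _ _ _ _).mpr
    ⟨k'⁻¹ * k, mul_mem (inv_mem k'.2) k.2, h * h'⁻¹, mul_mem h.2 (inv_mem h'.2), by
      calc g i' = (k' : G)⁻¹ * (k' * g i' * h') * (h' : G)⁻¹ := by group
        _ = _ := by rw [← e]; push_cast; group⟩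
  have hconj : (g i)⁻¹ * (k'⁻¹ * k : K) * g i = h' * h⁻¹ := by
    calc (g i)⁻¹ * (k'⁻¹ * k : K) * g i = (g i)⁻¹ * k'⁻¹ * (k * g i * h) * h⁻¹ := by
          push_cast; group
      _ = h' * h⁻¹ := by rw [e]; push_cast; group
  let u : (K ⊓ conjSub H (g i)).subgroupOf K := ⟨k'⁻¹ * k, Subgroup.mem_subgroupOf.mpr
    (Subgroup.mem_inf.mpr ⟨(k'⁻¹ * k).2, show _ ∈ H by rw [hconj]; exact (h' * h⁻¹).2⟩)⟩
  have hu : conjHom H K (g i) u = h' * h⁻¹ := Subtype.ext hconj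
  have hk : k = k' * u := by simp [u]
  rw [hk, (φ i).2, dcAction_smul_eq, map_inv, hu, smul_smul]
  congr 1
  group

noncomputable def mackeyLiftFun (hg : Surjective fun i => DoubleCoset.mk K H (g i))
    (φ : ∀ i, Coind ((K ⊓ conjSub H (g i)).subgroupOf K) Y) (a : G) : Y :=
  letI p := (exists_eq_mul_mul hg a).choose
  p.2.2⁻¹ • (φ p.1).1 p.2.1

theorem mackeyLiftFun_eq (hg : Bijective fun i => DoubleCoset.mk K H (g i))
    (φ : ∀ i, Coind ((K ⊓ conjSub H (g i)).subgroupOf K) Y) {a : G} {i : ι} {k : K} {h : H}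
    (e : a = k * g i * h) : mackeyLiftFun hg.2 φ a = h⁻¹ • (φ i).1 k :=
  inv_smul_apply_congr hg.1 φ ((exists_eq_mul_mul hg.2 a).choose_spec.symm.trans e)

noncomputable def mackeyLift (hg : Bijective fun i => DoubleCoset.mk K H (g i))
    (φ : ∀ i, Coind ((K ⊓ conjSub H (g i)).subgroupOf K) Y) : Coind H Y :=
  ⟨mackeyLiftFun hg.2 φ, fun a h => by
    obtain ⟨⟨i, k, h₀⟩, e⟩ := exists_eq_mul_mul hg.2 a
    have e' : a * h = k * g i * (h₀ * h : H) := by rw [e]; push_cast; group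
    rw [mackeyLiftFun_eq hg φ e, mackeyLiftFun_eq hg φ e', mul_inv_rev, mul_smul]⟩

theorem mackeyRestrict_mackeyLift (hg : Bijective fun i => DoubleCoset.mk K H (g i))
    (φ : ∀ i, Coind ((K ⊓ conjSub H (g i)).subgroupOf K) Y) :
    mackeyRestrict K g (mackeyLift hg φ) = φ :=
  funext fun i => Subtype.ext <| funext fun c => by
    show mackeyLiftFun hg.2 φ (c * g i) = _
    rw [mackeyLiftFun_eq hg φ (i := i) (k := c) (h := 1) (by simp), inv_one, one_smul]

theorem mackeyLift_mackeyRestrict (hg : Bijective fun i => DoubleCoset.mk K H (g i))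
    (F : Coind H Y) : mackeyLift hg (mackeyRestrict K g F) = F :=
  Subtype.ext <| funext fun a => by
    obtain ⟨⟨i, k, h⟩, e⟩ := exists_eq_mul_mul hg.2 a
    show mackeyLiftFun hg.2 _ a = _
    rw [mackeyLiftFun_eq hg _ e, e]
    exact (F.2 _ h).symm

noncomputable def mackeyEquiv (hg : Bijective fun i => DoubleCoset.mk K H (g i)) :
    Coind H Y ≃ ∀ i, Coind ((K ⊓ conjSub H (g i)).subgroupOf K) Y where
  toFun := mackeyRestrict K g
  invFun := mackeyLift hg
  left_inv := mackeyLift_mackeyRestrict hg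
  right_inv := mackeyRestrict_mackeyLift hg

end Mackey

section SigmaFiber

variable {S : Subgroup G} {ι : Type} {X : ι → Type} [MulAction S (Σ i, X i)] {j : ι}
  [MulAction S (X j)]

def coindSigmaFiberEquiv (hS : ∀ (s : S) (x : X j), s • (⟨j, x⟩ : Σ i, X i) = ⟨j, s • x⟩) :
    {ψ : Coind S (Σ i, X i) // ∀ c, (ψ.1 c).1 = j} ≃ Coind S (X j) where
  toFun ψ := ⟨fun c => (ψ.1.1 c).castSnd (ψ.2 c), fun c s => by
    rw [Sigma.castSnd_eq_iff, ← hS, Sigma.mk_castSnd]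
    exact ψ.1.2 c s⟩
  invFun φ := ⟨⟨fun c => ⟨j, φ.1 c⟩, fun c s => by
    show (⟨j, φ.1 (c * s)⟩ : Σ i, X i) = s⁻¹ • ⟨j, φ.1 c⟩
    rw [φ.2, hS]⟩, fun _ => rfl⟩
  left_inv ψ := Subtype.ext <| Subtype.ext <| funext fun c => Sigma.mk_castSnd _ _
  right_inv _ := rfl

end SigmaFiber

section Flambda

variable {H : Subgroup G} {n : ℕ} {X : Fin n → Type} [∀ i, MulAction H (X i)]
  {l : G ⧸ H → Fin n} {r : ℕ} {g : Fin r → G}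

theorem apply_smul_of_mem_stab {k : G} (hk : k ∈ stab H l) (x : G ⧸ H) : l (k • x) = l x := by
  simpa using (hk (k • x)).symm

theorem component_eq_iff (hg : Surjective fun i => DoubleCoset.mk (stab H l) H (g i))
    (F : Coind H (Σ i, X i)) :
    component H X F = l ↔ ∀ i c, ((mackeyRestrict (stab H l) g F i).1 c).1 = l (g i) := by
  constructor
  · intro hF i c
    show component H X F ((c * g i : G) : G ⧸ H) = _
    rw [hF]
    exact apply_smul_of_mem_stab c.2 (g i)
  · intro hF
    funext x
    induction x using QuotientGroup.induction_on with
    | H a =>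
      obtain ⟨⟨i, k, h⟩, rfl⟩ := exists_eq_mul_mul hg a
      show (F.1 (k * g i * h)).1 = l ((k * g i * h : G) : G ⧸ H)
      rw [F.2, QuotientGroup.mk_mul_of_mem _ h.2]
      exact (hF i k).trans (apply_smul_of_mem_stab k.2 (g i)).symm

noncomputable def flambdaEquiv (hg : Bijective fun i => DoubleCoset.mk (stab H l) H (g i)) :
    Flambda H X l ≃
      ∀ i, Coind ((stab H l ⊓ conjSub H (g i)).subgroupOf (stab H l)) (X (l (g i))) :=
  ((mackeyEquiv hg).subtypeEquiv (q := fun φ => ∀ i c, ((φ i).1 c).1 = l (g i))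
    (component_eq_iff hg.2)).trans <|
    Equiv.subtypePiEquivPi.trans <|
      Equiv.piCongrRight fun _ => coindSigmaFiberEquiv fun _ _ => rfl

theorem flambdaEquiv_smul (hg : Bijective fun i => DoubleCoset.mk (stab H l) H (g i))
    (k : stab H l) (f : Flambda H X l) (i : Fin r) (c : stab H l) :
    (flambdaEquiv hg (k • f) i).1 c = (flambdaEquiv hg f i).1 (k⁻¹ * c) :=
  Sigma.castSnd_congr
    (congrArg (fun ψ : Coind _ _ => ψ.1 c) (mackeyRestrict_smul (g := g) k f.1 i)) _ _

end Flambda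

theorem stmt_16_general (H : Subgroup G) (n : ℕ) (X : Fin n → Type)
    [∀ i, MulAction H (X i)] (l : G ⧸ H → Fin n) (r : ℕ) (g : Fin r → G)
    (hg : Function.Bijective fun i : Fin r => DoubleCoset.mk (stab H l) H (g i)) :
    ∃ e : Flambda H X l ≃
        (∀ i : Fin r, @Coind (stab H l) _
          (((stab H l) ⊓ conjSub H (g i)).subgroupOf (stab H l))
          (X (l (QuotientGroup.mk (g i))))
          (dcAction H (stab H l) (g i) (X (l (QuotientGroup.mk (g i)))))),
      ∀ (k : stab H l) (f : Flambda H X l) (i : Fin r) (c : stab H l),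
        ((e (k • f)) i).1 c = ((e f) i).1 (k⁻¹ * c) :=
  ⟨flambdaEquiv hg, flambdaEquiv_smul hg⟩

/-- Mackey-type decomposition of `F_λ`: for double coset representatives
`g₁, …, g_r` of `G_λ \ G / H`, there is a `G_λ`-equivariant bijection
`F_λ(X₁,…,Xₙ) ≅ ∏ᵢ Coind_{H_{gᵢ}}^{G_λ} Res X_{λ(gᵢH)}` where
`H_g = G_λ ∩ gHg⁻¹` acts on `X` via `h • x = (g⁻¹hg) • x`. -/
theorem stmt_16 [Finite G] (H : Subgroup G) (n : ℕ) (X : Fin n → Type)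
    [∀ i, MulAction H (X i)] (l : G ⧸ H → Fin n) (r : ℕ) (g : Fin r → G)
    (hg : Function.Bijective fun i : Fin r => DoubleCoset.mk (stab H l) H (g i)) :
    ∃ e : Flambda H X l ≃
        (∀ i : Fin r, @Coind (stab H l) _
          (((stab H l) ⊓ conjSub H (g i)).subgroupOf (stab H l))
          (X (l (QuotientGroup.mk (g i))))
          (dcAction H (stab H l) (g i) (X (l (QuotientGroup.mk (g i)))))),
      ∀ (k : stab H l) (f : Flambda H X l) (i : Fin r) (c : stab H l),
        ((e (k • f)) i).1 c = ((e f) i).1 (k⁻¹ * c) :=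
  stmt_16_general H n X l r g hg
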